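/- arXiv:1611.06600 — 10 statements merged into one kernel-verified Lean document; each statement's English description precedes it below -/
import Mathlib

section
/- For any monoid M, the set X(M) = {aM : a ∈ M} of principal right ideals, ordered by inclusion, is a strong M-partial order: M acts on X(M) by left translation a·(bM) = abM, this action is order-preserving, and for all y ∈ X(M) and a ∈ M one has {a·x : x ≤ y} = {x : x ≤ a·y}. -/
/-! Principal right ideals are ordered by divisibility, `bM ⊆ cM ↔ c ∣ b`, so every claim is a
statement about left divisibility. Monotonicity is `mul_dvd_mul_left`; for strongness, an `x`
with `a * y ∣ x` is `a * (y * d)` for some `d`, i.e. the translate of `(y * d)M ⊆ yM`. -/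

theorem Set.range_mul_subset_range_mul_iff {M : Type*} [Monoid M] {b c : M} :
    Set.range (b * ·) ⊆ Set.range (c * ·) ↔ c ∣ b := by
  constructor
  · intro h
    obtain ⟨d, hd⟩ := h ⟨1, mul_one b⟩
    exact ⟨d, hd.symm⟩
  · rintro ⟨d, rfl⟩ _ ⟨e, rfl⟩
    exact ⟨d * e, (mul_assoc c d e).symm⟩

theorem Set.range_mul_subset_range_mul_of_subset {M : Type*} [Monoid M] (a : M) {b c : M}
    (h : Set.range (b * ·) ⊆ Set.range (c * ·)) :
    Set.range ((a * b) * ·) ⊆ Set.range ((a * c) * ·) := by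
  rw [Set.range_mul_subset_range_mul_iff] at h ⊢
  exact mul_dvd_mul_left a h

/-- For any monoid `M`, the set `X(M) = {aM : a ∈ M}` of principal
right ideals, ordered by inclusion, is a strong `M`-partial order: the left
translation action `a • (bM) = (a*b)M` is well defined, order preserving, and
`{a • x : x ≤ y} = {x : x ≤ a • y}` for all `y ∈ X(M)`, `a ∈ M`. -/
theorem stmt_0 (M : Type*) [Monoid M] :
    (∀ a b c : M, Set.range (b * ·) = Set.range (c * ·) →
      Set.range ((a * b) * ·) = Set.range ((a * c) * ·)) ∧
    (∀ a b c : M, Set.range (b * ·) ⊆ Set.range (c * ·) →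
      Set.range ((a * b) * ·) ⊆ Set.range ((a * c) * ·)) ∧
    (∀ a y : M,
      {z : Set M | ∃ x : M, Set.range (x * ·) ⊆ Set.range (y * ·) ∧
        z = Set.range ((a * x) * ·)} =
      {z : Set M | ∃ x : M, z = Set.range (x * ·) ∧
        Set.range (x * ·) ⊆ Set.range ((a * y) * ·)}) := by
  refine ⟨fun a b c h => ?_, fun a b c => Set.range_mul_subset_range_mul_of_subset a,
    fun a y => ?_⟩
  · exact (Set.range_mul_subset_range_mul_of_subset a h.le).antisymm
      (Set.range_mul_subset_range_mul_of_subset a h.ge)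
  · ext z
    constructor
    · rintro ⟨x, hx, rfl⟩
      exact ⟨a * x, rfl, Set.range_mul_subset_range_mul_of_subset a hx⟩
    · rintro ⟨x, rfl, hx⟩
      obtain ⟨d, rfl⟩ := Set.range_mul_subset_range_mul_iff.mp hx
      exact ⟨y * d, Set.range_mul_subset_range_mul_iff.mpr (dvd_mul_right y d),
        by rw [mul_assoc]⟩
end

section
/- If M is a monoid acting on a finite M-partial order X in an order-preserving way, then the induced action a·x = {a·i : i ∈ x} on Fr(X) makes Fr(X) a strong M-partial order, and the map π : Fr(X) → X given by π(x) = max(x) is a surjective M-equivariant map such that the order on X is the image under π of the order on Fr(X). -/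
/-- For a finite `M`-partial order `X`, the induced action
`a • s = {a • i : i ∈ s}` on the set `Fr(X)` of nonempty chains (ordered by
end-extension) makes `Fr(X)` a strong `M`-partial order, and `π(s) = max s`
is a surjective `M`-equivariant map whose image of the order on `Fr(X)` is
the order on `X`. -/
theorem stmt_3 (M X : Type*) [Monoid M] [PartialOrder X] [Finite X] [MulAction M X]
    (hmono : ∀ (a : M) (x y : X), x ≤ y → a • x ≤ a • y)
    (Fr : Set (Set X)) (hFr : Fr = {s | s.Nonempty ∧ IsChain (· ≤ ·) s})
    (le' : Set X → Set X → Prop)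
    (hle : ∀ s t, le' s t ↔ s ⊆ t ∧ ∀ i ∈ s, ∀ j ∈ t \ s, i < j)
    (π : Set X → X) (hπ : ∀ s ∈ Fr, π s ∈ s ∧ ∀ i ∈ s, i ≤ π s) :
    (∀ a : M, ∀ s ∈ Fr, (a • ·) '' s ∈ Fr) ∧
    (∀ a : M, ∀ s ∈ Fr, ∀ t ∈ Fr, le' s t → le' ((a • ·) '' s) ((a • ·) '' t)) ∧
    (∀ a : M, ∀ t ∈ Fr,
      {z | ∃ s ∈ Fr, le' s t ∧ z = (a • ·) '' s} =
      {s | s ∈ Fr ∧ le' s ((a • ·) '' t)}) ∧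
    (∀ a : M, ∀ s ∈ Fr, π ((a • ·) '' s) = a • π s) ∧
    (∀ p : X, ∃ s ∈ Fr, π s = p) ∧
    (∀ s ∈ Fr, ∀ t ∈ Fr, le' s t → π s ≤ π t) ∧
    (∀ p q : X, p ≤ q → ∃ s ∈ Fr, ∃ t ∈ Fr, le' s t ∧ π s = p ∧ π t = q) := by
  have h1 : ∀ a : M, ∀ s ∈ Fr, (a • ·) '' s ∈ Fr := by
    intro a s hs
    rw [hFr] at hs ⊢
    refine ⟨hs.1.image _, ?_⟩
    rintro _ ⟨i, hi, rfl⟩ _ ⟨j, hj, rfl⟩ hne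
    have hij : i ≠ j := fun h => hne (by rw [h])
    rcases hs.2 hi hj hij with h | h
    · exact Or.inl (hmono a _ _ h)
    · exact Or.inr (hmono a _ _ h)
  have h2 : ∀ a : M, ∀ s ∈ Fr, ∀ t ∈ Fr, le' s t →
      le' ((a • ·) '' s) ((a • ·) '' t) := by
    intro a s hs t ht hst
    rw [hle] at hst ⊢
    refine ⟨Set.image_mono hst.1, ?_⟩
    rintro _ ⟨i, hi, rfl⟩ _ ⟨⟨j, hj, rfl⟩, hnot⟩
    have hjs : j ∉ s := fun h => hnot ⟨j, h, rfl⟩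
    have hij := hst.2 i hi j ⟨hj, hjs⟩
    exact lt_of_le_of_ne (hmono a _ _ hij.le) (fun h => hnot ⟨i, hi, h⟩)
  have h4 : ∀ a : M, ∀ s ∈ Fr, π ((a • ·) '' s) = a • π s := by
    intro a s hs
    obtain ⟨hmem, hub⟩ := hπ _ (h1 a s hs)
    obtain ⟨hmem', hub'⟩ := hπ s hs
    apply le_antisymm
    · obtain ⟨i, hi, hiq⟩ := hmem
      rw [← hiq]
      exact hmono a _ _ (hub' i hi)
    · exact hub _ ⟨π s, hmem', rfl⟩
  have hsingle : ∀ p : X, ({p} : Set X) ∈ Fr := by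
    intro p
    rw [hFr]
    exact ⟨⟨p, rfl⟩, Set.subsingleton_singleton.isChain⟩
  have hπsingle : ∀ p : X, π {p} = p := fun p => (hπ _ (hsingle p)).1
  refine ⟨h1, h2, ?_, h4, ?_, ?_, ?_⟩
  · -- strongness
    intro a t ht
    ext u
    constructor
    · rintro ⟨s, hs, hst, rfl⟩
      exact ⟨h1 a s hs, h2 a s hs t ht hst⟩
    · rintro ⟨hu, hut⟩
      rw [hFr] at hu
      have ht' := ht; rw [hFr] at ht'
      rw [hle] at hut
      have hsub : u ⊆ (a • ·) '' t := hut.1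
      have himg : u = (a • ·) '' {j | j ∈ t ∧ a • j ∈ u} := by
        ext x
        constructor
        · intro hx
          obtain ⟨j, hj, rfl⟩ := hsub hx
          exact ⟨j, ⟨hj, hx⟩, rfl⟩
        · rintro ⟨j, ⟨_, hju⟩, rfl⟩
          exact hju
      refine ⟨{j | j ∈ t ∧ a • j ∈ u}, ?_, ?_, himg⟩
      · rw [hFr]
        constructor
        · obtain ⟨x, hx⟩ := hu.1
          obtain ⟨j, hj, rfl⟩ := hsub hx
          exact ⟨j, hj, hx⟩
        · exact ht'.2.mono (fun j hj => hj.1)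
      · rw [hle]
        refine ⟨fun j hj => hj.1, ?_⟩
        rintro i hi j ⟨hjt, hjs⟩
        have hju : a • j ∉ u := fun h => hjs ⟨hjt, h⟩
        have hij : i ≠ j := fun h => hjs (h ▸ hi)
        rcases ht'.2 hi.1 hjt hij with h | h
        · exact lt_of_le_of_ne h hij
        · exfalso
          have hlt : a • i < a • j := hut.2 _ hi.2 _ ⟨⟨j, hjt, rfl⟩, hju⟩
          exact absurd (hmono a _ _ h) (not_le_of_gt hlt)
  · -- surjectivity
    intro p
    exact ⟨{p}, hsingle p, hπsingle p⟩
  · -- monotonicity of π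
    intro s hs t ht hst
    rw [hle] at hst
    exact (hπ t ht).2 _ (hst.1 (hπ s hs).1)
  · -- order lifting
    intro p q hpq
    rcases eq_or_lt_of_le hpq with rfl | hlt
    · refine ⟨{p}, hsingle p, {p}, hsingle p, ?_, hπsingle p, hπsingle p⟩
      rw [hle]
      exact ⟨subset_rfl, fun i hi j hj => absurd hj.1 hj.2⟩
    · have htFr : ({p, q} : Set X) ∈ Fr := by
        rw [hFr]
        refine ⟨⟨p, Or.inl rfl⟩, ?_⟩
        intro x hx y hy hne
        simp only [Set.mem_insert_iff, Set.mem_singleton_iff] at hx hy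
        rcases hx with rfl | rfl <;> rcases hy with rfl | rfl
        · exact absurd rfl hne
        · exact Or.inl hpq
        · exact Or.inr hpq
        · exact absurd rfl hne
      refine ⟨{p}, hsingle p, {p, q}, htFr, ?_, hπsingle p, ?_⟩
      · rw [hle]
        refine ⟨by simp, ?_⟩
        rintro i (rfl : i = p) j ⟨hj1, hj2⟩
        rcases hj1 with rfl | rfl
        · exact absurd rfl hj2
        · exact hlt
      · obtain ⟨hmem, hub⟩ := hπ _ htFr
        rcases hmem with h | h
        · exact absurd (h ▸ hub q (Or.inr rfl)) (not_le_of_gt hlt)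
        · exact h
end

section
/- The monoid I_n of all nondecreasing surjections f : {0,...,n−1} → {0,...,k−1} for some k ≤ n (equivalently, nondecreasing f : n → n with f(0) = 0 and f(i+1) ≤ f(i)+1), under composition, is R-trivial. -/
/-!
Every element `m` of `I_n` is deflationary, `m i ≤ i`, since it starts at `0` and climbs by at
most one per step. If `f I_n = g I_n` then, as `id ∈ I_n`, we can write `f = g ∘ a` and
`g = f ∘ b` with `a, b ∈ I_n`; monotonicity of `f` and `g` then gives `f ≤ g ≤ f` pointwise.
-/

theorem Fin.val_map_le_of_map_zero_of_map_succ_le {n k : ℕ} {m : Fin n → Fin k}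
    (h0 : ∀ h : 0 < n, (m ⟨0, h⟩ : ℕ) = 0)
    (hstep : ∀ (i : Fin n) (h : (i : ℕ) + 1 < n), (m ⟨i + 1, h⟩ : ℕ) ≤ (m i : ℕ) + 1)
    (i : Fin n) : (m i : ℕ) ≤ i := by
  obtain ⟨i, hi⟩ := i
  induction i with
  | zero => exact (h0 hi).le
  | succ i ih =>
    calc (m ⟨i + 1, hi⟩ : ℕ) ≤ m ⟨i, by omega⟩ + 1 := hstep ⟨i, by omega⟩ hi
      _ ≤ i + 1 := Nat.add_le_add_right (ih (by omega)) 1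

theorem eq_of_eq_comp_of_eq_comp_of_le_id {α β : Type*} [Preorder α] [PartialOrder β]
    {f g : α → β} {a b : α → α} (hf : Monotone f) (hg : Monotone g)
    (ha : ∀ x, a x ≤ x) (hb : ∀ x, b x ≤ x) (hfa : f = g ∘ a) (hgb : g = f ∘ b) :
    f = g :=
  funext fun x => le_antisymm
    (calc f x = g (a x) := congrFun hfa x
      _ ≤ g x := hg (ha x))
    (calc g x = f (b x) := congrFun hgb x
      _ ≤ f x := hf (hb x))

/-- The monoid `I_n` of nondecreasing `f : n → n` with `f 0 = 0`
and `f (i+1) ≤ f i + 1`, under composition, is R-trivial: equality of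
principal right ideals `f ∘ I_n = g ∘ I_n` implies `f = g`. -/
theorem stmt_6 (n : ℕ)
    (P : (Fin n → Fin n) → Prop)
    (hP : ∀ f, P f ↔ Monotone f ∧ (∀ h : 0 < n, f ⟨0, h⟩ = ⟨0, h⟩) ∧
      ∀ (i : ℕ) (h : i + 1 < n), (f ⟨i + 1, h⟩ : ℕ) ≤ (f ⟨i, by omega⟩ : ℕ) + 1) :
    ∀ f g : Fin n → Fin n, P f → P g →
      {h | ∃ m, P m ∧ h = f ∘ m} = {h | ∃ m, P m ∧ h = g ∘ m} → f = g := by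
  intro f g hf hg hideal
  have hid : P id := (hP id).2 ⟨monotone_id, fun _ => rfl, fun _ _ => by simp⟩
  have hdefl : ∀ m, P m → ∀ i, m i ≤ i := fun m hm i => by
    obtain ⟨-, h0, hstep⟩ := (hP m).1 hm
    exact Fin.le_def.2 <| Fin.val_map_le_of_map_zero_of_map_succ_le
      (fun h => congrArg Fin.val (h0 h)) (fun i => hstep i) i
  obtain ⟨a, ha, hfa⟩ : f ∈ {h | ∃ m, P m ∧ h = g ∘ m} := hideal ▸ ⟨id, hid, rfl⟩
  obtain ⟨b, hb, hgb⟩ : g ∈ {h | ∃ m, P m ∧ h = f ∘ m} := hideal ▸ ⟨id, hid, rfl⟩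
  exact eq_of_eq_comp_of_eq_comp_of_le_id ((hP f).1 hf).1 ((hP g).1 hg).1
    (hdefl a ha) (hdefl b hb) hfa hgb
end

section
/- Let M be a finite monoid such that ab = b for all a, b ∈ M with b ≠ 1. Let U be a compact right topological semigroup on which M acts by continuous endomorphisms. Then all elements a ∈ M with a ≠ 1 have the same image a(U) ⊆ U, and this common image T is a compact subsemigroup of U on which every element of M acts as the identity. -/
/-! A non-identity `a` satisfies `c * a = a` for every `c`, so `φ c (φ a v) = φ (c * a) v = φ a v`:
every `φ c` fixes `φ a(U)` pointwise. Hence `φ a(U) ⊆ φ b(U)` for all `b`. -/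

open Set

theorem apply_eq_self_of_mem_range {M U : Type*} [Monoid M] {φ : M → U → U}
    (hact : ∀ a b u, φ (a * b) u = φ a (φ b u)) {a : M} (ha : ∀ c, c * a = a) (c : M)
    {u : U} (hu : u ∈ range (φ a)) : φ c u = u := by
  obtain ⟨v, rfl⟩ := hu
  rw [← hact, ha]

theorem mul_mem_range_of_map_mul {U : Type*} [Mul U] {f : U → U}
    (hf : ∀ u v, f (u * v) = f u * f v) {u v : U} (hu : u ∈ range f) (hv : v ∈ range f) :
    u * v ∈ range f := by
  obtain ⟨x, rfl⟩ := hu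
  obtain ⟨y, rfl⟩ := hv
  exact ⟨x * y, hf x y⟩

theorem stmt_9_general (M U : Type*) [Monoid M]
    [Semigroup U] [TopologicalSpace U] [CompactSpace U]
    (hM : ∀ a b : M, b ≠ 1 → a * b = b)
    (φ : M → U → U) (hcont : ∀ a, Continuous (φ a))
    (hend : ∀ a u v, φ a (u * v) = φ a u * φ a v)
    (hact : ∀ a b u, φ (a * b) u = φ a (φ b u)) :
    (∀ a b : M, a ≠ 1 → b ≠ 1 → Set.range (φ a) = Set.range (φ b)) ∧
    ∀ a : M, a ≠ 1 →
      IsCompact (Set.range (φ a)) ∧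
      (∀ u v : U, u ∈ Set.range (φ a) → v ∈ Set.range (φ a) →
        u * v ∈ Set.range (φ a)) ∧
      (∀ c : M, ∀ u ∈ Set.range (φ a), φ c u = u) := by
  have hfix : ∀ a : M, a ≠ 1 → ∀ c, ∀ u ∈ range (φ a), φ c u = u := fun a ha c _ hu =>
    apply_eq_self_of_mem_range hact (fun c => hM c a ha) c hu
  have hsub : ∀ a : M, a ≠ 1 → ∀ b, range (φ a) ⊆ range (φ b) := fun a ha b u hu =>
    ⟨u, hfix a ha b u hu⟩
  exact ⟨fun a b ha hb => (hsub a ha b).antisymm (hsub b hb a), fun a ha =>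
    ⟨isCompact_range (hcont a), fun _ _ => mul_mem_range_of_map_mul (hend a), hfix a ha⟩⟩

/-- For a finite monoid `M` with `ab = b` whenever `b ≠ 1`, acting
by continuous endomorphisms `φ` on a compact right topological semigroup `U`:
all `a ≠ 1` have the same image `T = a(U)`, and `T` is a compact subsemigroup
of `U` on which every element of `M` acts as the identity. -/
theorem stmt_9 (M U : Type*) [Monoid M] [Finite M]
    [Semigroup U] [TopologicalSpace U] [CompactSpace U]
    (hrt : ∀ u : U, Continuous (· * u))
    (hM : ∀ a b : M, b ≠ 1 → a * b = b)
    (φ : M → U → U) (hcont : ∀ a, Continuous (φ a))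
    (hend : ∀ a u v, φ a (u * v) = φ a u * φ a v)
    (hone : ∀ u, φ 1 u = u) (hact : ∀ a b u, φ (a * b) u = φ a (φ b u)) :
    (∀ a b : M, a ≠ 1 → b ≠ 1 → Set.range (φ a) = Set.range (φ b)) ∧
    ∀ a : M, a ≠ 1 →
      IsCompact (Set.range (φ a)) ∧
      (∀ u v : U, u ∈ Set.range (φ a) → v ∈ Set.range (φ a) →
        u * v ∈ Set.range (φ a)) ∧
      (∀ c : M, ∀ u ∈ Set.range (φ a), φ c u = u) :=
  stmt_9_general M U hM φ hcont hend hact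
end

section
/- Let P be a partial order and ⟨P⟩ the semigroup generated freely by the elements of P modulo the relations p ∨ q = q ∨ p = q whenever p ≤ q. Then every element of ⟨P⟩ can be uniquely written as p₀ ∨ ⋯ ∨ pₙ where consecutive elements pᵢ, pᵢ₊₁ are incomparable in P. In particular, if P is linearly ordered then ⟨P⟩ is isomorphic to P with the operation p ∨ q = max(p, q). -/
/-- The defining relations of `⟨P⟩`: `p ∨ q = q ∨ p = q` whenever `p ≤ q`. -/
def chainRel (P : Type*) [PartialOrder P] : FreeSemigroup P → FreeSemigroup P → Prop :=
  fun x y => ∃ p q : P, p ≤ q ∧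
    (x = FreeSemigroup.of p * FreeSemigroup.of q ∨
      x = FreeSemigroup.of q * FreeSemigroup.of p) ∧
    y = FreeSemigroup.of q


namespace Stmt11Aux

set_option linter.unusedSectionVars false

variable {α : Type*} [PartialOrder α]

/-- Incomparability. -/
def incomp (p q : α) : Prop := ¬ p ≤ q ∧ ¬ q ≤ p

open Classical in
/-- Insert `a` at the front of a list, merging with comparable heads. -/
noncomputable def ins (a : α) : List α → List α
  | [] => [a]
  | b :: t => if a ≤ b then b :: t else if b ≤ a then ins a t else a :: b :: t

theorem ins_nil (a : α) : ins a [] = [a] := rfl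

open Classical in
theorem ins_cons (a b : α) (t : List α) :
    ins a (b :: t) = if a ≤ b then b :: t else if b ≤ a then ins a t else a :: b :: t := rfl

theorem ins_cons_of_le {a b : α} (h : a ≤ b) (t : List α) : ins a (b :: t) = b :: t := by
  rw [ins_cons, if_pos h]

theorem ins_cons_of_ge {a b : α} (h1 : ¬ a ≤ b) (h2 : b ≤ a) (t : List α) :
    ins a (b :: t) = ins a t := by
  rw [ins_cons, if_neg h1, if_pos h2]

theorem ins_cons_of_incomp {a b : α} (h1 : ¬ a ≤ b) (h2 : ¬ b ≤ a) (t : List α) :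
    ins a (b :: t) = a :: b :: t := by
  rw [ins_cons, if_neg h1, if_neg h2]

/-- Normal form of a list. -/
noncomputable def nrm (l : List α) : List α := l.foldr ins []

theorem nrm_nil : nrm ([] : List α) = [] := rfl

theorem nrm_cons (a : α) (t : List α) : nrm (a :: t) = ins a (nrm t) := rfl

theorem ins_ne_nil (a : α) (l : List α) : ins a l ≠ [] := by
  induction l with
  | nil => simp [ins_nil]
  | cons b t ih =>
    rw [ins_cons]
    split_ifs <;> simp [ih]

theorem nrm_ne_nil {l : List α} (h : l ≠ []) : nrm l ≠ [] := by
  cases l with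
  | nil => exact absurd rfl h
  | cons a t => exact ins_ne_nil a (nrm t)

theorem chain'_ins (a : α) {l : List α} (h : l.Chain' incomp) : (ins a l).Chain' incomp := by
  induction l with
  | nil => simp [ins_nil, List.Chain']
  | cons b t ih =>
    simp only [List.Chain', List.isChain_cons] at h
    rw [ins_cons]
    split_ifs with h1 h2
    · exact List.isChain_cons.mpr h
    · exact ih h.2
    · simp only [List.Chain', List.isChain_cons_cons]
      exact ⟨⟨h1, h2⟩, List.isChain_cons.mpr h⟩

theorem chain'_nrm (l : List α) : (nrm l).Chain' incomp := by
  induction l with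
  | nil => simp [nrm_nil, List.Chain']
  | cons a t ih => rw [nrm_cons]; exact chain'_ins a ih

theorem nrm_of_chain' {l : List α} (h : l.Chain' incomp) : nrm l = l := by
  induction l with
  | nil => rfl
  | cons a t ih =>
    simp only [List.Chain', List.isChain_cons] at h
    rw [nrm_cons, ih h.2]
    cases t with
    | nil => rfl
    | cons b t' =>
      have hab : incomp a b := h.1 b rfl
      exact ins_cons_of_incomp hab.1 hab.2 t'

theorem ins_ins_of_le {a b : α} (h : a ≤ b) : ∀ x : List α, ins a (ins b x) = ins b x := by
  intro x
  induction x with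
  | nil => rw [ins_nil, ins_cons_of_le h]
  | cons c t ih =>
    rw [ins_cons]
    split_ifs with h1 h2
    · exact ins_cons_of_le (h.trans h1) t
    · exact ih
    · exact ins_cons_of_le h (c :: t)

theorem ins_ins_of_ge {a b : α} (h : b ≤ a) : ∀ x : List α, ins a (ins b x) = ins a x := by
  intro x
  induction x with
  | nil =>
    rw [ins_nil, ins_nil, ins_cons]
    split_ifs with h1
    · rw [le_antisymm h1 h]
    · rfl
  | cons c t ih =>
    by_cases h1 : b ≤ c
    · rw [ins_cons_of_le h1]
    · by_cases h2 : c ≤ b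
      · rw [ins_cons_of_ge h1 h2, ih,
          ins_cons_of_ge (fun hac => h1 (h.trans hac)) (h2.trans h)]
      · rw [ins_cons_of_incomp h1 h2]
        by_cases h3 : a ≤ b
        · have hab : a = b := le_antisymm h3 h
          subst hab
          rw [ins_cons_of_le le_rfl, ins_cons_of_incomp h1 h2]
        · rw [ins_cons_of_ge h3 h]

theorem foldr_ins_ins (a : α) : ∀ (m s : List α),
    (ins a m).foldr ins s = ins a (m.foldr ins s) := by
  intro m
  induction m with
  | nil => intro s; rfl
  | cons b t ih =>
    intro s
    rw [List.foldr_cons]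
    by_cases h1 : a ≤ b
    · rw [ins_cons_of_le h1, List.foldr_cons, ins_ins_of_le h1]
    · by_cases h2 : b ≤ a
      · rw [ins_cons_of_ge h1 h2, ih, ins_ins_of_ge h2]
      · rw [ins_cons_of_incomp h1 h2]; rfl

theorem foldr_ins_nrm (u : List α) (s : List α) : u.foldr ins s = (nrm u).foldr ins s := by
  induction u generalizing s with
  | nil => rfl
  | cons a t ih =>
    rw [List.foldr_cons, ih, nrm_cons, foldr_ins_ins]

theorem nrm_append (u v : List α) : nrm (u ++ v) = (nrm u).foldr ins (nrm v) := by
  show (u ++ v).foldr ins [] = _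
  rw [List.foldr_append]
  exact foldr_ins_nrm u (nrm v)

/-! ### FreeSemigroup side -/

/-- The list of a free semigroup element. -/
def tl (w : FreeSemigroup α) : List α := w.head :: w.tail

theorem tl_injective : Function.Injective (tl (α := α)) := by
  rintro ⟨a, s⟩ ⟨b, t⟩ h
  simp only [tl, List.cons.injEq] at h
  simp [h.1, h.2]

theorem tl_mul (w x : FreeSemigroup α) : tl (w * x) = tl w ++ tl x := rfl

theorem tl_ne_nil (w : FreeSemigroup α) : tl w ≠ [] := by simp [tl]

theorem tl_of (a : α) : tl (FreeSemigroup.of a) = [a] := rfl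

/-- Build a free semigroup element from a nonempty list. -/
def mkl (l : List α) (h : l ≠ []) : FreeSemigroup α := ⟨l.head h, l.tail⟩

theorem tl_mkl (l : List α) (h : l ≠ []) : tl (mkl l h) = l := by
  simp [tl, mkl]

theorem mkl_cons (a : α) (l : List α) (h : (a :: l) ≠ []) :
    mkl (a :: l) h = ⟨a, l⟩ := rfl

theorem mkl_cons_cons (a b : α) (l : List α) (h : (a :: b :: l) ≠ []) :
    mkl (a :: b :: l) h = FreeSemigroup.of a * mkl (b :: l) (List.cons_ne_nil _ _) := rfl

theorem mkl_singleton (a : α) (h : ([a] : List α) ≠ []) :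
    mkl [a] h = FreeSemigroup.of a := rfl

/-- Normal form of a free semigroup element. -/
noncomputable def nf (w : FreeSemigroup α) : FreeSemigroup α :=
  mkl (nrm (tl w)) (nrm_ne_nil (tl_ne_nil w))

theorem tl_nf (w : FreeSemigroup α) : tl (nf w) = nrm (tl w) := tl_mkl _ _

theorem nf_of_chain' {w : FreeSemigroup α} (h : (tl w).Chain' incomp) : nf w = w :=
  tl_injective (by rw [tl_nf, nrm_of_chain' h])

end Stmt11Aux

namespace Stmt11Aux

theorem mkl_congr {α : Type*} {l l' : List α} (hl : l ≠ []) (hl' : l' ≠ []) (h : l = l') :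
    mkl l hl = mkl l' hl' := by subst h; rfl

theorem head_mkl_eq {α : Type*} {l : List α} {hl : l ≠ []} {a : α} (h : l = [a]) :
    (mkl l hl).head = a := by subst h; rfl

variable {P : Type*} [PartialOrder P]


open FreeSemigroup in
theorem key (a : P) : ∀ (m : List P) (hm : m ≠ []),
    ((of a * mkl m hm : FreeSemigroup P) : (conGen (chainRel P)).Quotient)
      = ↑(mkl (ins a m) (ins_ne_nil a m)) := by
  intro m
  induction m with
  | nil => intro hm; exact absurd rfl hm
  | cons b t ih =>
    intro hm
    rcases t with _ | ⟨c, t'⟩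
    · rw [mkl_singleton]
      by_cases h1 : a ≤ b
      · rw [mkl_congr _ (List.cons_ne_nil b []) (ins_cons_of_le h1 []), mkl_singleton]
        exact (Con.eq _).mpr (ConGen.Rel.of _ _ ⟨a, b, h1, Or.inl rfl, rfl⟩)
      · by_cases h2 : b ≤ a
        · rw [mkl_congr _ (List.cons_ne_nil a [])
            ((ins_cons_of_ge h1 h2 []).trans (ins_nil a)), mkl_singleton]
          exact (Con.eq _).mpr (ConGen.Rel.of _ _ ⟨b, a, h2, Or.inr rfl, rfl⟩)
        · rw [mkl_congr _ (List.cons_ne_nil a [b]) (ins_cons_of_incomp h1 h2 [])]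
          rfl
    · have ht : (c :: t') ≠ [] := List.cons_ne_nil _ _
      rw [mkl_cons_cons]
      by_cases h1 : a ≤ b
      · rw [mkl_congr _ (List.cons_ne_nil b (c :: t')) (ins_cons_of_le h1 _), mkl_cons_cons]
        have hrel : ((of a * of b : FreeSemigroup P) : (conGen (chainRel P)).Quotient)
            = ↑(of b) := (Con.eq _).mpr (ConGen.Rel.of _ _ ⟨a, b, h1, Or.inl rfl, rfl⟩)
        rw [← mul_assoc, Con.coe_mul, hrel, ← Con.coe_mul]
      · by_cases h2 : b ≤ a
        · rw [mkl_congr _ (ins_ne_nil a (c :: t')) (ins_cons_of_ge h1 h2 _)]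
          have hrel : ((of a * of b : FreeSemigroup P) : (conGen (chainRel P)).Quotient)
              = ↑(of a) := (Con.eq _).mpr (ConGen.Rel.of _ _ ⟨b, a, h2, Or.inr rfl, rfl⟩)
          rw [← mul_assoc, Con.coe_mul, hrel, ← Con.coe_mul, ih ht]
        · rw [mkl_congr _ (List.cons_ne_nil a (b :: c :: t')) (ins_cons_of_incomp h1 h2 _)]
          rfl

theorem coe_nf_aux : ∀ (l : List P) (a : P),
    ((⟨a, l⟩ : FreeSemigroup P) : (conGen (chainRel P)).Quotient)
      = ↑(mkl (nrm (a :: l)) (nrm_ne_nil (List.cons_ne_nil a l))) := by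
  intro l
  induction l with
  | nil => intro a; rfl
  | cons b l ih =>
    intro a
    have h1 : (⟨a, b :: l⟩ : FreeSemigroup P) = FreeSemigroup.of a * ⟨b, l⟩ := rfl
    rw [h1, Con.coe_mul, ih b, ← Con.coe_mul]
    have h2 : mkl (nrm (b :: l)) (nrm_ne_nil (List.cons_ne_nil b l))
        = mkl (nrm (b :: l)) (nrm_ne_nil (List.cons_ne_nil b l)) := rfl
    rw [key a (nrm (b :: l)) (nrm_ne_nil (List.cons_ne_nil b l))]
    exact congrArg _ (mkl_congr _ _ rfl)

theorem coe_nf (w : FreeSemigroup P) :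
    (w : (conGen (chainRel P)).Quotient) = ↑(nf w) := by
  cases w with
  | mk a l => exact coe_nf_aux l a

theorem nf_respects : ∀ x y : FreeSemigroup P, conGen (chainRel P) x y → nf x = nf y := by
  intro x y h
  induction h with
  | of x y hxy =>
    obtain ⟨p, q, hpq, hx, hy⟩ := hxy
    apply tl_injective
    rw [tl_nf, tl_nf, hy]
    rcases hx with rfl | rfl
    · show nrm [p, q] = nrm [q]
      simp only [nrm_cons, nrm_nil, ins_nil]
      rw [ins_cons_of_le hpq]
    · show nrm [q, p] = nrm [q]
      simp only [nrm_cons, nrm_nil, ins_nil]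
      by_cases h1 : q ≤ p
      · rw [ins_cons_of_le h1, le_antisymm hpq h1]
      · rw [ins_cons_of_ge h1 hpq, ins_nil]
  | refl x => rfl
  | symm _ ih => exact ih.symm
  | trans _ _ ih1 ih2 => exact ih1.trans ih2
  | mul _ _ ih1 ih2 =>
    apply tl_injective
    rw [tl_nf, tl_nf, tl_mul, tl_mul, nrm_append, nrm_append]
    have e1 := congrArg tl ih1
    have e2 := congrArg tl ih2
    rw [tl_nf, tl_nf] at e1 e2
    rw [e1, e2]

/-- The normal-form function on the quotient. -/
noncomputable def F : (conGen (chainRel P)).Quotient → FreeSemigroup P :=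
  Quotient.lift nf (fun a b h => nf_respects a b h)

theorem F_mk (w : FreeSemigroup P) :
    F ((w : (conGen (chainRel P)).Quotient)) = nf w := rfl

end Stmt11Aux


open Stmt11Aux FreeSemigroup

/-- In the semigroup `⟨P⟩` (the free semigroup on `P` modulo
`p ∨ q = q ∨ p = q` for `p ≤ q`), every element has a unique representation
`p₀ ∨ ⋯ ∨ pₙ` with consecutive `pᵢ` incomparable.  In particular, if `P` is
linear then `⟨P⟩` is isomorphic to `P` with the operation `max`. -/
theorem stmt_11 (P : Type*) [PartialOrder P] :
    (∀ x : (conGen (chainRel P)).Quotient,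
      ∃! w : FreeSemigroup P,
        List.Chain' (fun p q : P => ¬ p ≤ q ∧ ¬ q ≤ p) (w.head :: w.tail) ∧
        (w : (conGen (chainRel P)).Quotient) = x) ∧
    ((∀ p q : P, p ≤ q ∨ q ≤ p) →
      ∃ e : (conGen (chainRel P)).Quotient ≃ P,
        (∀ p : P, e ((FreeSemigroup.of p : FreeSemigroup P) :
            (conGen (chainRel P)).Quotient) = p) ∧
        ∀ x y : (conGen (chainRel P)).Quotient,
          (e x ≤ e y → e (x * y) = e y) ∧ (e y ≤ e x → e (x * y) = e x)) := by
  constructor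
  · intro x
    induction x using Con.induction_on with
    | H w =>
      refine ⟨nf w, ⟨?_, (coe_nf w).symm⟩, ?_⟩
      · have := chain'_nrm (tl w)
        rw [← tl_nf] at this
        exact this
      · rintro w' ⟨hc, he⟩
        have h1 : nf w' = w' := nf_of_chain' hc
        have h2 : F ((w' : (conGen (chainRel P)).Quotient))
            = F ((w : (conGen (chainRel P)).Quotient)) := congrArg F he
        rw [F_mk, F_mk] at h2
        exact h1 ▸ h2
  · intro hlin
    have tail_nf : ∀ w : FreeSemigroup P, (nf w).tail = [] := by
      intro w
      have hc : ((nf w).head :: (nf w).tail).Chain' incomp := by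
        have := chain'_nrm (tl w); rw [← tl_nf] at this; exact this
      cases htl : (nf w).tail with
      | nil => rfl
      | cons c t =>
        rw [htl] at hc
        simp only [List.Chain', List.isChain_cons_cons] at hc
        rcases hlin (nf w).head c with h | h
        · exact absurd h hc.1.1
        · exact absurd h hc.1.2
    have of_head_nf : ∀ w : FreeSemigroup P, FreeSemigroup.of ((nf w).head) = nf w :=
      fun w => FreeSemigroup.ext rfl (tail_nf w).symm
    have hleft : ∀ x : (conGen (chainRel P)).Quotient,
        ((FreeSemigroup.of ((F x).head) : FreeSemigroup P) :
          (conGen (chainRel P)).Quotient) = x := by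
      intro x
      induction x using Con.induction_on with
      | H w =>
        rw [F_mk, of_head_nf w]
        exact (coe_nf w).symm
    have hof : ∀ p : P, (F ((FreeSemigroup.of p : FreeSemigroup P) :
        (conGen (chainRel P)).Quotient)).head = p := by
      intro p
      rw [F_mk]
      exact congrArg FreeSemigroup.head (nf_of_chain' (by simp [tl, List.Chain']))
    have key2 : ∀ p q : P, p ≤ q →
        (F ((FreeSemigroup.of p * FreeSemigroup.of q : FreeSemigroup P) :
          (conGen (chainRel P)).Quotient)).head = q := by
      intro p q hpq
      rw [F_mk]
      show (mkl (nrm (tl (FreeSemigroup.of p * FreeSemigroup.of q))) _).head = q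
      apply head_mkl_eq
      show nrm [p, q] = [q]
      simp only [nrm_cons, nrm_nil, ins_nil]
      exact ins_cons_of_le hpq []
    have key3 : ∀ p q : P, q ≤ p →
        (F ((FreeSemigroup.of p * FreeSemigroup.of q : FreeSemigroup P) :
          (conGen (chainRel P)).Quotient)).head = p := by
      intro p q hqp
      by_cases hpq : p ≤ q
      · rw [key2 p q hpq]; exact le_antisymm hqp hpq
      · rw [F_mk]
        show (mkl (nrm (tl (FreeSemigroup.of p * FreeSemigroup.of q))) _).head = p
        apply head_mkl_eq
        show nrm [p, q] = [p]
        simp only [nrm_cons, nrm_nil, ins_nil]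
        rw [ins_cons_of_ge hpq hqp, ins_nil]
    refine ⟨⟨fun x => (F x).head,
      fun p => ((FreeSemigroup.of p : FreeSemigroup P) : (conGen (chainRel P)).Quotient),
      hleft, hof⟩, hof, ?_⟩
    intro x y
    have hx := hleft x
    have hy := hleft y
    constructor
    · intro h
      have h' : (F x).head ≤ (F y).head := h
      show (F (x * y)).head = (F y).head
      rw [← hx, ← hy, ← Con.coe_mul, key2 _ _ h', hof]
    · intro h
      have h' : (F y).head ≤ (F x).head := h
      show (F (x * y)).head = (F x).head
      rw [← hx, ← hy, ← Con.coe_mul, key3 _ _ h', hof]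
end

section
/- Let M be a monoid and P an M-partial order. Then the formula a(p₀ ∨ ⋯ ∨ pₙ) = a(p₀) ∨ ⋯ ∨ a(pₙ) gives a well-defined action of M on the semigroup ⟨P⟩ by semigroup endomorphisms. -/
/-! A monotone map `P → Q` sends the defining relations of `⟨P⟩` to those of `⟨Q⟩`, so it
induces a semigroup homomorphism `⟨P⟩ → ⟨Q⟩`, functorially in the map. The action of `a` is the
homomorphism induced by the monotone map `p ↦ a • p`. -/

namespace FreeSemigroup

variable {α β γ : Type*}

theorem map_id : map (id : α → α) = MulHom.id (FreeSemigroup α) :=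
  hom_ext rfl

theorem map_comp (f : α → β) (g : β → γ) : map (g ∘ f) = (map g).comp (map f) :=
  hom_ext rfl

end FreeSemigroup

section ChainQuotient

variable {P Q R : Type*} [PartialOrder P] [PartialOrder Q] [PartialOrder R]

theorem chainRel_map {f : P → Q} (hf : Monotone f) {x y : FreeSemigroup P}
    (h : chainRel P x y) : chainRel Q (FreeSemigroup.map f x) (FreeSemigroup.map f y) := by
  obtain ⟨p, q, hpq, hx | hx, rfl⟩ := h <;> subst hx
  · exact ⟨f p, f q, hf hpq, Or.inl (map_mul _ _ _), rfl⟩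
  · exact ⟨f p, f q, hf hpq, Or.inr (map_mul _ _ _), rfl⟩

theorem conGen_chainRel_map {f : P → Q} (hf : Monotone f) {x y : FreeSemigroup P}
    (h : conGen (chainRel P) x y) :
    conGen (chainRel Q) (FreeSemigroup.map f x) (FreeSemigroup.map f y) := by
  have hle : conGen (chainRel P) ≤ (conGen (chainRel Q)).comap _ (map_mul (FreeSemigroup.map f)) :=
    Con.conGen_le.2 fun _ _ h => ConGen.Rel.of _ _ (chainRel_map hf h)
  exact hle h

def chainQuotMap (f : P → Q) (hf : Monotone f) :
    (conGen (chainRel P)).Quotient →ₙ* (conGen (chainRel Q)).Quotient where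
  toFun := Quotient.map' (FreeSemigroup.map f) fun _ _ => conGen_chainRel_map hf
  map_mul' := by
    rintro ⟨x⟩ ⟨y⟩
    exact congrArg ((↑) : FreeSemigroup Q → (conGen (chainRel Q)).Quotient) (map_mul _ x y)

@[simp]
theorem chainQuotMap_coe {f : P → Q} (hf : Monotone f) (x : FreeSemigroup P) :
    chainQuotMap f hf x = (FreeSemigroup.map f x : (conGen (chainRel Q)).Quotient) :=
  rfl

theorem chainQuotMap_id : chainQuotMap (id : P → P) monotone_id = MulHom.id _ := by
  ext ⟨x⟩
  simp [FreeSemigroup.map_id]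

theorem chainQuotMap_comp {f : P → Q} {g : Q → R} (hf : Monotone f) (hg : Monotone g) :
    chainQuotMap (g ∘ f) (hg.comp hf) = (chainQuotMap g hg).comp (chainQuotMap f hf) := by
  ext ⟨x⟩
  simp [FreeSemigroup.map_comp]

end ChainQuotient

/-- For a monoid `M` and an `M`-partial order `P`, the formula
`a(p₀ ∨ ⋯ ∨ pₙ) = a(p₀) ∨ ⋯ ∨ a(pₙ)` gives a well-defined action of `M` on
the semigroup `⟨P⟩` by semigroup endomorphisms. -/
theorem stmt_12 (M P : Type*) [Monoid M] [PartialOrder P] [MulAction M P]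
    (hmono : ∀ (a : M) (p q : P), p ≤ q → a • p ≤ a • q) :
    ∃ φ : M → (conGen (chainRel P)).Quotient → (conGen (chainRel P)).Quotient,
      (∀ (a : M) (p : P),
        φ a ((FreeSemigroup.of p : FreeSemigroup P) : (conGen (chainRel P)).Quotient) =
          ((FreeSemigroup.of (a • p) : FreeSemigroup P) : (conGen (chainRel P)).Quotient)) ∧
      (∀ (a : M) (x y : (conGen (chainRel P)).Quotient), φ a (x * y) = φ a x * φ a y) ∧
      (∀ x, φ 1 x = x) ∧
      (∀ (a b : M) (x), φ (a * b) x = φ a (φ b x)) := by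
  have hmono' (a : M) : Monotone (a • · : P → P) := fun _ _ => hmono a _ _
  refine ⟨fun a => chainQuotMap (a • ·) (hmono' a), fun _ _ => rfl, fun _ => map_mul _, ?_, ?_⟩
  · intro x
    simp only [one_smul]
    exact DFunLike.congr_fun chainQuotMap_id x
  · intro a b x
    simp only [mul_smul]
    exact DFunLike.congr_fun (chainQuotMap_comp (hmono' b) (hmono' a)) x
end

section
/- Let S be a partial semigroup and I ⊆ S a two-sided ideal such that S is I-directed. Then the set {U ∈ γS : I ∈ U} is a nonempty compact two-sided ideal in the compact right topological semigroup γS of cofinite ultrafilters on S. -/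
/-- For a partial semigroup `S` (operation `op`, associative in
the partial sense) and a two-sided ideal `I` such that `S` is `I`-directed,
the set `{U ∈ γS : I ∈ U}` is a nonempty compact two-sided ideal in the
semigroup `γS` of cofinite ultrafilters with the ultrafilter product. -/
theorem stmt_13 (S : Type*) (op : S → S → Option S)
    (hassoc : ∀ r s t : S,
      ((op r s).bind fun x => op x t) = ((op s t).bind fun y => op r y))
    (I : Set S) (hne : I.Nonempty)
    (hideal : ∀ x y z : S, op x y = some z → x ∈ I ∨ y ∈ I → z ∈ I)
    (hdir : ∀ F : Finset S, ∃ x ∈ I, ∀ s ∈ F, (op s x).isSome)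
    (γS : Set (Ultrafilter S))
    (hγ : γS = {U : Ultrafilter S | ∀ x : S, {y | (op x y).isSome} ∈ U})
    (mul : Ultrafilter S → Ultrafilter S → Ultrafilter S)
    (hmul : ∀ U ∈ γS, ∀ V ∈ γS, ∀ A : Set S,
      A ∈ mul U V ↔ {x | {y | ∃ z ∈ A, op x y = some z} ∈ V} ∈ U) :
    ({U ∈ γS | I ∈ U}).Nonempty ∧
    IsCompact {U ∈ γS | I ∈ U} ∧
    (∀ U ∈ γS, ∀ V ∈ γS, mul U V ∈ γS) ∧
    (∀ U ∈ γS, ∀ V ∈ γS, U ∈ {W ∈ γS | I ∈ W} ∨ V ∈ {W ∈ γS | I ∈ W} →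
      mul U V ∈ {W ∈ γS | I ∈ W}) := by
  classical
  have : Nonempty S := ⟨hne.choose⟩
  -- auxiliary family of sets
  set A : Finset S → Set S := fun F => I ∩ {y | ∀ s ∈ F, (op s y).isSome} with hA
  have hAne : ∀ F, (A F).Nonempty := by
    intro F
    obtain ⟨x, hxI, hx⟩ := hdir F
    exact ⟨x, hxI, hx⟩
  have hdirA : Directed (· ≥ ·) fun F => (Filter.principal (A F)) := by
    intro F G
    refine ⟨F ∪ G, ?_, ?_⟩ <;>
      · refine le_of_le_of_eq (Filter.principal_mono.mpr ?_) rfl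
        intro y hy
        exact ⟨hy.1, fun s hs => hy.2 s (by simp [hs])⟩
  have hne' : (⨅ F, Filter.principal (A F)).NeBot :=
    Filter.iInf_neBot_of_directed hdirA fun F => Filter.principal_neBot_iff.mpr (hAne F)
  let U₀ : Ultrafilter S := Ultrafilter.of (⨅ F, Filter.principal (A F))
  have hU₀ : ∀ F, A F ∈ U₀ := fun F =>
    Ultrafilter.of_le _ ((iInf_le (fun F => Filter.principal (A F)) F :)
      (Filter.mem_principal_self _))
  have hU₀γ : U₀ ∈ γS := by
    rw [hγ]
    intro x
    exact Filter.mem_of_superset (hU₀ {x}) fun y hy => hy.2 x (by simp)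
  have hU₀I : I ∈ U₀ := Filter.mem_of_superset (hU₀ ∅) fun y hy => hy.1
  -- closure under multiplication
  have hmulγ : ∀ U ∈ γS, ∀ V ∈ γS, mul U V ∈ γS := by
    intro U hU V hV
    have hU' := hγ ▸ hU
    have hV' := hγ ▸ hV
    rw [hγ]
    intro x
    rw [hmul U hU V hV]
    refine Filter.mem_of_superset (hU' x) ?_
    intro a ha
    obtain ⟨w, hw⟩ := Option.isSome_iff_exists.mp ha
    refine Filter.mem_of_superset (hV' w) ?_
    intro b hb
    obtain ⟨u, hu⟩ := Option.isSome_iff_exists.mp hb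
    have h := hassoc x a b
    rw [hw] at h
    simp only [Option.bind_some, Option.bind_some] at h
    rw [hu] at h
    obtain ⟨z, hz1, hz2⟩ := Option.bind_eq_some_iff.mp h.symm
    exact ⟨z, Option.isSome_iff_exists.mpr ⟨u, hz2⟩, hz1⟩
  refine ⟨⟨U₀, hU₀γ, hU₀I⟩, ?_, hmulγ, ?_⟩
  · -- compactness
    have : {U ∈ γS | I ∈ U} =
        (⋂ x : S, {U : Ultrafilter S | {y | (op x y).isSome} ∈ U}) ∩
          {U : Ultrafilter S | I ∈ U} := by
      ext U
      simp only [hγ, Set.sep_setOf, Set.mem_setOf_eq, Set.mem_inter_iff, Set.mem_iInter]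
    rw [this]
    exact ((isClosed_iInter fun x => ultrafilter_isClosed_basic _).inter
      (ultrafilter_isClosed_basic I)).isCompact
  · -- ideal property
    intro U hU V hV hor
    have hU' := hγ ▸ hU
    have hV' := hγ ▸ hV
    refine ⟨hmulγ U hU V hV, ?_⟩
    rw [hmul U hU V hV]
    rcases hor with ⟨_, hUI⟩ | ⟨_, hVI⟩
    · refine Filter.mem_of_superset (U.inter_mem hUI (hU' (hne.choose))) ?_
      intro a ⟨haI, _⟩
      refine Filter.mem_of_superset (hV' a) ?_
      intro b hb
      obtain ⟨z, hz⟩ := Option.isSome_iff_exists.mp hb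
      exact ⟨z, hideal a b z hz (Or.inl haI), hz⟩
    · refine Filter.univ_mem' ?_
      intro a
      refine Filter.mem_of_superset (V.inter_mem hVI (hV' a)) ?_
      intro b ⟨hbI, hb⟩
      obtain ⟨z, hz⟩ := Option.isSome_iff_exists.mp hb
      exact ⟨z, hideal a b z hz (Or.inr hbI), hz⟩
end

section
/- Let S be a partial semigroup and E ⊆ S a right ideal such that S is E-directed. Then {U ∈ γS : E ∈ U} is a nonempty compact right ideal in γS. -/
/-!
`E` and the sets `{y | xy is defined}` have the finite intersection property (this is
`E`-directedness), so some ultrafilter contains all of them, and the ultrafilters containing them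
form a closed, hence compact, subset of `βS`. If `E ∈ U` then `E ∈ UV` since `xy ∈ E` whenever
`x ∈ E`; and `UV ∈ γS` by associativity: if `ax = w` and `wy` is defined, so are `xy` and `a(xy)`.
-/

open Filter

theorem Ultrafilter.exists_forall_mem_of_finset {S ι : Type*} (E : Set S) (P : ι → Set S)
    (hdir : ∀ F : Finset ι, ∃ x ∈ E, ∀ i ∈ F, x ∈ P i) :
    ∃ U : Ultrafilter S, E ∈ U ∧ ∀ i, P i ∈ U := by
  choose f hfE hfP using hdir
  let U := Ultrafilter.of (Filter.map f atTop)
  have hU : ∀ {A : Set S}, (∀ᶠ F in atTop, f F ∈ A) → A ∈ U := fun h => Ultrafilter.of_le _ h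
  refine ⟨U, hU (Eventually.of_forall hfE), fun i => hU ?_⟩
  exact (eventually_ge_atTop {i}).mono fun F hF => hfP F i (hF (Finset.mem_singleton_self i))

theorem Ultrafilter.isClosed_setOf_forall_mem {S ι : Type*} (P : ι → Set S) :
    IsClosed {U : Ultrafilter S | ∀ i, P i ∈ U} := by
  simpa only [Set.ofPred_forall] using isClosed_iInter fun i => ultrafilter_isClosed_basic (P i)

theorem exists_op_eq_some_of_assoc {S : Type*} {op : S → S → Option S}
    (hassoc : ∀ r s t : S,
      ((op r s).bind fun x => op x t) = ((op s t).bind fun y => op r y))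
    {a x w y : S} (hw : op a x = some w) (hy : (op w y).isSome) :
    ∃ z, (op a z).isSome ∧ op x y = some z := by
  obtain ⟨u, hu⟩ := Option.isSome_iff_exists.mp hy
  have h := hassoc a x y
  rw [hw, Option.bind_some, hu] at h
  cases hxy : op x y with
  | none => simp [hxy] at h
  | some z =>
    rw [hxy, Option.bind_some] at h
    exact ⟨z, by rw [← h]; rfl, rfl⟩

theorem stmt_14_general (S : Type*) (op : S → S → Option S)
    (hassoc : ∀ r s t : S,
      ((op r s).bind fun x => op x t) = ((op s t).bind fun y => op r y))
    (E : Set S)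
    (hideal : ∀ x y z : S, op x y = some z → x ∈ E → z ∈ E)
    (hdir : ∀ F : Finset S, ∃ x ∈ E, ∀ s ∈ F, (op s x).isSome)
    (γS : Set (Ultrafilter S))
    (hγ : γS = {U : Ultrafilter S | ∀ x : S, {y | (op x y).isSome} ∈ U})
    (mul : Ultrafilter S → Ultrafilter S → Ultrafilter S)
    (hmul : ∀ U ∈ γS, ∀ V ∈ γS, ∀ A : Set S,
      A ∈ mul U V ↔ {x | {y | ∃ z ∈ A, op x y = some z} ∈ V} ∈ U) :
    ({U ∈ γS | E ∈ U}).Nonempty ∧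
    IsCompact {U ∈ γS | E ∈ U} ∧
    (∀ U ∈ {W ∈ γS | E ∈ W}, ∀ V ∈ γS, mul U V ∈ {W ∈ γS | E ∈ W}) := by
  subst hγ
  obtain ⟨U, hUE, hUγ⟩ := Ultrafilter.exists_forall_mem_of_finset E _ hdir
  refine ⟨⟨U, hUγ, hUE⟩, ((Ultrafilter.isClosed_setOf_forall_mem _).inter
    (ultrafilter_isClosed_basic E)).isCompact, ?_⟩
  rintro W ⟨hWγ, hWE⟩ V hV
  refine ⟨fun a => (hmul W hWγ V hV _).2 ?_, (hmul W hWγ V hV E).2 ?_⟩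
  · filter_upwards [hWγ a] with x hx
    obtain ⟨w, hw⟩ := Option.isSome_iff_exists.mp hx
    filter_upwards [hV w] with y hy
    exact exists_op_eq_some_of_assoc hassoc hw hy
  · filter_upwards [hWE] with x hx
    filter_upwards [hV x] with y hy
    obtain ⟨z, hz⟩ := Option.isSome_iff_exists.mp hy
    exact ⟨z, hideal x y z hz hx, hz⟩

/-- For a partial semigroup `S` and a right ideal `E` such that
`S` is `E`-directed, the set `{U ∈ γS : E ∈ U}` is a nonempty compact right
ideal in the semigroup `γS` of cofinite ultrafilters. -/
theorem stmt_14 (S : Type*) (op : S → S → Option S)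
    (hassoc : ∀ r s t : S,
      ((op r s).bind fun x => op x t) = ((op s t).bind fun y => op r y))
    (E : Set S) (hne : E.Nonempty)
    (hideal : ∀ x y z : S, op x y = some z → x ∈ E → z ∈ E)
    (hdir : ∀ F : Finset S, ∃ x ∈ E, ∀ s ∈ F, (op s x).isSome)
    (γS : Set (Ultrafilter S))
    (hγ : γS = {U : Ultrafilter S | ∀ x : S, {y | (op x y).isSome} ∈ U})
    (mul : Ultrafilter S → Ultrafilter S → Ultrafilter S)
    (hmul : ∀ U ∈ γS, ∀ V ∈ γS, ∀ A : Set S,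
      A ∈ mul U V ↔ {x | {y | ∃ z ∈ A, op x y = some z} ∈ V} ∈ U) :
    ({U ∈ γS | E ∈ U}).Nonempty ∧
    IsCompact {U ∈ γS | E ∈ U} ∧
    (∀ U ∈ {W ∈ γS | E ∈ W}, ∀ V ∈ γS, mul U V ∈ {W ∈ γS | E ∈ W}) :=
  stmt_14_general S op hassoc E hideal hdir γS hγ mul hmul
end

section
/- The extension μ(M, t, f) = (N, τ, φ) of a monoid M by a compatible endomorphism f and element t (satisfying st = tf(s) for all s) is again a monoid, φ is an endomorphism of N, and στ = τφ(σ) for all σ ∈ N. -/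
/-- `φ` of the extension `μ(M,t,f)`: `φ(τᵉs) = tᵉ f(s)`, where `Sum.inl s`
encodes `s` and `Sum.inr s` encodes `τs`. -/
def muPhi {M : Type*} [Monoid M] (t : M) (f : M → M) : M ⊕ M → M
  | Sum.inl s => f s
  | Sum.inr s => t * f s

/-- Multiplication of the extension `N = M ⊔ τM`:
`(τ^{e₁}s₁)(τ^{e₂}s₂) = τ^{e₁}(s₁s₂)` if `e₂ = 0`, and `τ(φ(τ^{e₁}s₁)s₂)` if `e₂ = 1`. -/
def muMul {M : Type*} [Monoid M] (t : M) (f : M → M) : M ⊕ M → M ⊕ M → M ⊕ M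
  | Sum.inl s₁, Sum.inl s₂ => Sum.inl (s₁ * s₂)
  | Sum.inr s₁, Sum.inl s₂ => Sum.inr (s₁ * s₂)
  | x, Sum.inr s₂ => Sum.inr (muPhi t f x * s₂)

/-!
Associativity reduces to `φ` being multiplicative: when the right factor is `τc` both sides are
`τ(φ(·)c)`, and otherwise the products only multiply in `M`. Multiplicativity of `φ` in turn comes
from `f` being an endomorphism together with the commutation rule `st = t f(s)`, which moves `t`
past `φ(σ)` in `φ(σ) · t f(s) = t f(φ(σ)) f(s)`.
-/

section MuExtension

variable {M : Type*} [Monoid M] {t : M} {f : M → M}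

theorem muMul_inr (x : M ⊕ M) (c : M) : muMul t f x (Sum.inr c) = Sum.inr (muPhi t f x * c) := by
  rcases x with a | a <;> rfl

theorem muPhi_muMul (hfmul : ∀ x y : M, f (x * y) = f x * f y)
    (hcom : ∀ s : M, s * t = t * f s) (x y : M ⊕ M) :
    muPhi t f (muMul t f x y) = muPhi t f x * muPhi t f y := by
  have hcom' : ∀ s u : M, s * (t * u) = t * (f s * u) := fun s u => by
    rw [← mul_assoc, hcom, mul_assoc]
  rcases x with a | a <;> rcases y with b | b <;>
    simp only [muMul, muPhi, hfmul, mul_assoc, hcom']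

theorem muMul_assoc (hfmul : ∀ x y : M, f (x * y) = f x * f y)
    (hcom : ∀ s : M, s * t = t * f s) (x y z : M ⊕ M) :
    muMul t f (muMul t f x y) z = muMul t f x (muMul t f y z) := by
  rcases z with c | c
  · rcases x with a | a <;> rcases y with b | b <;> simp only [muMul, muPhi, mul_assoc]
  · simp only [muMul_inr, muPhi_muMul hfmul hcom, mul_assoc]

theorem muMul_inl_one_left (hf1 : f 1 = 1) (x : M ⊕ M) : muMul t f (Sum.inl 1) x = x := by
  rcases x with a | a <;> simp only [muMul, muPhi, hf1, one_mul]

theorem muMul_inl_one_right (x : M ⊕ M) : muMul t f x (Sum.inl 1) = x := by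
  rcases x with a | a <;> simp only [muMul, mul_one]

theorem muMul_inr_one (σ : M ⊕ M) :
    muMul t f σ (Sum.inr 1) = muMul t f (Sum.inr 1) (Sum.inl (muPhi t f σ)) := by
  simp only [muMul, muPhi, mul_one, one_mul]

end MuExtension

/-- if `f` is an endomorphism of `M` and `st = t f(s)` for all
`s`, then `μ(M,t,f) = (N,τ,φ)` is a monoid with identity `1 ∈ M`, `φ` is an
endomorphism of `N`, and `στ = τ φ(σ)` for every `σ ∈ N`. -/
theorem stmt_16 (M : Type*) [Monoid M] (t : M) (f : M → M)
    (hf1 : f 1 = 1) (hfmul : ∀ x y : M, f (x * y) = f x * f y)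
    (hcom : ∀ s : M, s * t = t * f s) :
    (∀ x y z : M ⊕ M, muMul t f (muMul t f x y) z = muMul t f x (muMul t f y z)) ∧
    (∀ x : M ⊕ M, muMul t f (Sum.inl 1) x = x ∧ muMul t f x (Sum.inl 1) = x) ∧
    (∀ x y : M ⊕ M, (Sum.inl (muPhi t f (muMul t f x y)) : M ⊕ M) =
      muMul t f (Sum.inl (muPhi t f x)) (Sum.inl (muPhi t f y))) ∧
    (∀ σ : M ⊕ M, muMul t f σ (Sum.inr 1) =
      muMul t f (Sum.inr 1) (Sum.inl (muPhi t f σ))) :=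
  ⟨muMul_assoc hfmul hcom,
    fun x => ⟨muMul_inl_one_left hf1 x, muMul_inl_one_right x⟩,
    fun x y => by rw [muPhi_muMul hfmul hcom]; rfl,
    muMul_inr_one⟩
end

section
/- Let M be a monoid and suppose a, b ∈ M are such that a ∉ bM and b ∉ aM. Consider the sequence of pointed M-sets Xₙ = X(M) (the set of principal right ideals with left multiplication action, distinguished point M = 1·M). Then this sequence does not have the Ramsey property: there is a 2-coloring of the partial semigroup ⟨(Xₙ)⟩ of located words over X(M) such that for every basic sequence (wᵢ) with the distinguished point occurring in each wᵢ, the words a(w₀)w₁ and b(w₀)w₁ receive different colors. -/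
/-- `X(M)`: the set of principal right ideals `cM` of `M`. -/
def PIdeal (M : Type*) [Monoid M] := {s : Set M // ∃ c : M, s = Set.range (c * ·)}

/-- The left-translation action of `M` on `X(M)`: `x • (cM) = (xc)M`. -/
def actP {M : Type*} [Monoid M] (x : M) (s : PIdeal M) : PIdeal M :=
  ⟨(x * ·) '' s.1, by
    obtain ⟨c, hc⟩ := s.2
    refine ⟨x * c, ?_⟩
    rw [hc]
    ext y
    constructor
    · rintro ⟨z, ⟨m, rfl⟩, rfl⟩
      exact ⟨m, by simp [mul_assoc]⟩
    · rintro ⟨m, rfl⟩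
      exact ⟨c * m, ⟨m, rfl⟩, by simp [mul_assoc]⟩⟩

/-- The distinguished point `M = 1·M` of `X(M)`. -/
def ptP (M : Type*) [Monoid M] : PIdeal M := ⟨Set.range ((1 : M) * ·), ⟨1, rfl⟩⟩

/-! Colour a word by whether the first of its letters lying in `{aM, bM}` is `aM`. Every letter
of `a(w₀)` is an ideal `acM ⊆ aM`, and `b ∉ aM`, so `bM` never occurs in `a(w₀)`, while
`aM = a·M` does because `M` occurs in `w₀`. Hence the first hit in `a(w₀)w₁` is `aM` and,
symmetrically, the first hit in `b(w₀)w₁` is `bM`. -/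

theorem List.find?_eq_some_of_unique {α : Type*} {p : α → Bool} {l : List α} {x : α}
    (hx : x ∈ l) (hpx : p x) (huniq : ∀ y ∈ l, p y → y = x) : l.find? p = some x := by
  obtain ⟨y, hy⟩ := Option.isSome_iff_exists.1 (List.find?_isSome.2 ⟨x, hx, hpx⟩)
  rw [hy, huniq y (List.mem_of_find?_eq_some hy) (List.find?_some hy)]

section FirstHit

variable {ι X : Type*} [DecidableEq X]

def firstHit (u v : X) (w : List (ι × X)) : Option X :=
  (w.map Prod.snd).find? fun s => decide (s = u ∨ s = v)

theorem firstHit_comm (u v : X) (w : List (ι × X)) : firstHit u v w = firstHit v u w := by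
  simp only [firstHit, or_comm]

theorem firstHit_append_of_mem_of_notMem {u v : X} {w : List (ι × X)}
    (hu : u ∈ w.map Prod.snd) (hv : v ∉ w.map Prod.snd) (w' : List (ι × X)) :
    firstHit u v (w ++ w') = some u := by
  have hfind : (w.map Prod.snd).find? (fun s => decide (s = u ∨ s = v)) = some u := by
    refine List.find?_eq_some_of_unique hu (by simp) fun y hy hpy => ?_
    rcases of_decide_eq_true hpy with rfl | rfl
    exacts [rfl, absurd hy hv]
  rw [firstHit, List.map_append, List.find?_append, hfind, Option.some_or]

end FirstHit

section PrincipalIdeals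

variable {M : Type*} [Monoid M] {a b : M}

theorem actP_ne_actP_ptP (hb : b ∉ Set.range (a * ·)) (s : PIdeal M) :
    actP a s ≠ actP b (ptP M) := by
  intro h
  have hmem : b ∈ (actP b (ptP M)).1 := ⟨1, ⟨1, mul_one 1⟩, mul_one b⟩
  obtain ⟨z, -, hz⟩ := h ▸ hmem
  exact hb ⟨z, hz⟩

theorem actP_ptP_mem_map {ι : Type*} {w : List (ι × PIdeal M)} {n : ι} (hn : (n, ptP M) ∈ w) :
    actP a (ptP M) ∈ (w.map fun p => (p.1, actP a p.2)).map Prod.snd := by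
  simp only [List.map_map, List.mem_map, Function.comp_apply]
  exact ⟨_, hn, rfl⟩

theorem actP_ptP_notMem_map {ι : Type*} (hb : b ∉ Set.range (a * ·)) (w : List (ι × PIdeal M)) :
    actP b (ptP M) ∉ (w.map fun p => (p.1, actP a p.2)).map Prod.snd := by
  simp only [List.map_map, List.mem_map, Function.comp_apply, not_exists, not_and]
  exact fun p _ => actP_ne_actP_ptP hb p.2

end PrincipalIdeals

/-- if `a ∉ bM` and `b ∉ aM`, the constant sequence of pointed
`M`-sets `Xₙ = X(M)` fails the Ramsey property: there is a `2`-coloring of the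
located words over `X(M)` such that, for every basic sequence `(wᵢ)` with the
distinguished point occurring in each `wᵢ`, the words `a(w₀)w₁` and `b(w₀)w₁`
get different colors.  Located words are encoded as lists of pairs
`(position, letter)` with strictly increasing positions. -/
theorem stmt_19 (M : Type*) [Monoid M] (a b : M)
    (ha : a ∉ Set.range (b * ·)) (hb : b ∉ Set.range (a * ·)) :
    ∃ color : List (ℕ × PIdeal M) → Bool,
      ∀ w : ℕ → List (ℕ × PIdeal M),
        (∀ i, w i ≠ [] ∧ (w i).Chain' (fun p q => p.1 < q.1)) →
        (∀ i j, i < j → ∀ p ∈ w i, ∀ q ∈ w j, p.1 < q.1) →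
        (∀ i, ∃ n : ℕ, (n, ptP M) ∈ w i) →
        color (((w 0).map (fun p => (p.1, actP a p.2))) ++ w 1) ≠
        color (((w 0).map (fun p => (p.1, actP b p.2))) ++ w 1) := by
  classical
  set u := actP a (ptP M)
  set v := actP b (ptP M)
  have huv : u ≠ v := actP_ne_actP_ptP hb (ptP M)
  refine ⟨fun w => decide (firstHit u v w = some u), fun w _ _ hpt => ?_⟩
  obtain ⟨n, hn⟩ := hpt 0
  have hu : firstHit u v ((w 0).map (fun p => (p.1, actP a p.2)) ++ w 1) = some u :=
    firstHit_append_of_mem_of_notMem (actP_ptP_mem_map hn) (actP_ptP_notMem_map hb _) _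
  have hv : firstHit u v ((w 0).map (fun p => (p.1, actP b p.2)) ++ w 1) = some v := by
    rw [firstHit_comm]
    exact firstHit_append_of_mem_of_notMem (actP_ptP_mem_map hn) (actP_ptP_notMem_map ha _) _
  simp [hu, hv, huv.symm]
end
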